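/- Contractivity and unitarity of the boundary-condition map T between deficiency subspaces: let θ₁, θ₂ ∈ ℝ, let μ : (0,∞) → [0,1] be measurable, and let f₁, f₃, f₄, f₅ ∈ L²(ℝ × (0,∞)). Define g₄(a,b) := e^{iθ₂}μ(b)f₁(a,b) − e^{−b/ħ}f₄(a−b,b); g₂(a,b) := e^{iθ₁}μ(b)(f₄(a,b) + e^{−b/ħ}g₄(a+b,b)); g₃(a,b) := e^{iθ₁}μ(b)f₅(a,b) − e^{−b/ħ}f₃(a+b,b); g₆(a,b) := e^{iθ₂}μ(b)(f₃(a,b) + e^{−b/ħ}g₃(a−b,b)). Define Ψ₋ ∈ L²(Ω; ℂ⁸) by ψ_{--+} = e^{−s̃/ħ}f₁(s_p+s̃, s), ψ_{-++} = e^{−s̃/ħ}f₃(s_p+s̃, s+s̃), ψ_{+--} = e^{−s/ħ}f₄(s_p−s, s̃+s), ψ_{+-+} = e^{−s/ħ}f₅(s_p−s, s̃), all other components 0; and define Ψ₊ ∈ L²(Ω; ℂ⁸) by ψ_{-+-} = e^{−s/ħ}g₂(s_p−s, s̃), ψ_{-++} = e^{−s/ħ}g₃(s_p−s, s̃+s),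 ψ_{+--} = e^{−s̃/ħ}g₄(s_p+s̃, s+s̃), ψ_{++-} = e^{−s̃/ħ}g₆(s_p+s̃, s), all other components 0. Then ‖Ψ₊‖_{L²(Ω;ℂ⁸)} ≤ ‖Ψ₋‖_{L²(Ω;ℂ⁸)}, with equality whenever μ ≡ 1. -/

import Mathlib

open Complex MeasureTheory

noncomputable section

/-- The domain `Ω = ℝ × (0,∞) × (0,∞)` with coordinates `(s_p, s, s̃)`. -/
def Omega : Set (Fin 3 → ℝ) := {x | 0 < x 1 ∧ 0 < x 2}

/-- `e^{iθ}`. -/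
def eIθ (θ : ℝ) : ℂ := Complex.exp (θ * Complex.I)

/-- `g₄(a,b) = e^{iθ₂}μ(b)f₁(a,b) − e^{−b/ħ}f₄(a−b,b)`. -/
def g4fun (hbar θ₂ : ℝ) (μ : ℝ → ℝ) (f₁ f₄ : ℝ × ℝ → ℂ) (q : ℝ × ℝ) : ℂ :=
  eIθ θ₂ * ((μ q.2 : ℝ) : ℂ) * f₁ q - ((Real.exp (-q.2 / hbar) : ℝ) : ℂ) * f₄ (q.1 - q.2, q.2)

/-- `g₂(a,b) = e^{iθ₁}μ(b)(f₄(a,b) + e^{−b/ħ}g₄(a+b,b))`. -/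
def g2fun (hbar θ₁ θ₂ : ℝ) (μ : ℝ → ℝ) (f₁ f₄ : ℝ × ℝ → ℂ) (q : ℝ × ℝ) : ℂ :=
  eIθ θ₁ * ((μ q.2 : ℝ) : ℂ) *
    (f₄ q + ((Real.exp (-q.2 / hbar) : ℝ) : ℂ) * g4fun hbar θ₂ μ f₁ f₄ (q.1 + q.2, q.2))

/-- `g₃(a,b) = e^{iθ₁}μ(b)f₅(a,b) − e^{−b/ħ}f₃(a+b,b)`. -/
def g3fun (hbar θ₁ : ℝ) (μ : ℝ → ℝ) (f₃ f₅ : ℝ × ℝ → ℂ) (q : ℝ × ℝ) : ℂ :=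
  eIθ θ₁ * ((μ q.2 : ℝ) : ℂ) * f₅ q - ((Real.exp (-q.2 / hbar) : ℝ) : ℂ) * f₃ (q.1 + q.2, q.2)

/-- `g₆(a,b) = e^{iθ₂}μ(b)(f₃(a,b) + e^{−b/ħ}g₃(a−b,b))`. -/
def g6fun (hbar θ₁ θ₂ : ℝ) (μ : ℝ → ℝ) (f₃ f₅ : ℝ × ℝ → ℂ) (q : ℝ × ℝ) : ℂ :=
  eIθ θ₂ * ((μ q.2 : ℝ) : ℂ) *
    (f₃ q + ((Real.exp (-q.2 / hbar) : ℝ) : ℂ) * g3fun hbar θ₁ μ f₃ f₅ (q.1 - q.2, q.2))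

/-- The squared `L²(Ω; ℂ⁸)` norm of `Ψ₋` (its four nonzero components). -/
def normSqMinus (hbar : ℝ) (f₁ f₃ f₄ f₅ : ℝ × ℝ → ℂ) : ℝ :=
  (∫ x in Omega, ‖((Real.exp (-(x 2) / hbar) : ℝ) : ℂ) * f₁ (x 0 + x 2, x 1)‖ ^ 2) +
  (∫ x in Omega, ‖((Real.exp (-(x 2) / hbar) : ℝ) : ℂ) * f₃ (x 0 + x 2, x 1 + x 2)‖ ^ 2) +
  (∫ x in Omega, ‖((Real.exp (-(x 1) / hbar) : ℝ) : ℂ) * f₄ (x 0 - x 1, x 2 + x 1)‖ ^ 2) +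
  (∫ x in Omega, ‖((Real.exp (-(x 1) / hbar) : ℝ) : ℂ) * f₅ (x 0 - x 1, x 2)‖ ^ 2)

/-- The squared `L²(Ω; ℂ⁸)` norm of `Ψ₊` (its four nonzero components). -/
def normSqPlus (hbar θ₁ θ₂ : ℝ) (μ : ℝ → ℝ) (f₁ f₃ f₄ f₅ : ℝ × ℝ → ℂ) : ℝ :=
  (∫ x in Omega, ‖((Real.exp (-(x 1) / hbar) : ℝ) : ℂ) *
      g2fun hbar θ₁ θ₂ μ f₁ f₄ (x 0 - x 1, x 2)‖ ^ 2) +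
  (∫ x in Omega, ‖((Real.exp (-(x 1) / hbar) : ℝ) : ℂ) *
      g3fun hbar θ₁ μ f₃ f₅ (x 0 - x 1, x 2 + x 1)‖ ^ 2) +
  (∫ x in Omega, ‖((Real.exp (-(x 2) / hbar) : ℝ) : ℂ) *
      g4fun hbar θ₂ μ f₁ f₄ (x 0 + x 2, x 1 + x 2)‖ ^ 2) +
  (∫ x in Omega, ‖((Real.exp (-(x 2) / hbar) : ℝ) : ℂ) *
      g6fun hbar θ₁ θ₂ μ f₃ f₅ (x 0 + x 2, x 1)‖ ^ 2)

open Set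
open scoped ENNReal

/-!
Each nonzero component of `Ψ±` is a profile `f_j` or `g_j`, translated in its first argument and
damped by `e^{-w/ħ}` in one of the variables `w ∈ {s, s̃}`. Integrating out the translation and
then `w` turns `‖Ψ±‖²` into a sum of squared norms of the profiles in `L²(ℝ × (0,∞))`, with weight
`ħ/2` when the second argument of the profile is a single variable, and weight
`∫_0^u e^{-2w/ħ} dw = ħ/2 (1 - e^{-2u/ħ})` when it is `s + s̃`.

The boundary map splits into the channels `(f₁, f₄) ↦ (g₂, g₄)` and `(f₅, f₃) ↦ (g₆, g₃)`. On the
fibre `u` of the second variable, after shifting the first variable by `u`, each channel is the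
pointwise map `(z, v) ↦ (e^{iβ} μ (v + ε w), w)` with `w = μ e^{iα} z - ε v` and `ε = e^{-u/ħ}`, and
  `‖z‖² + (1-ε²)‖v‖² = μ²‖v + εw‖² + (1-ε²)‖w‖² + (1-μ²)(‖z‖² + ‖μ ε e^{iα} z + (1-ε²) v‖²)`,
so the map is a contraction for `0 ≤ μ ≤ 1` and an isometry for `μ = 1`.
-/

lemma ENNReal.toReal_add_le_of_add_le {a b c d : ℝ≥0∞} (h : a + b ≤ c + d) (hc : c ≠ ⊤)
    (hd : d ≠ ⊤) : a.toReal + b.toReal ≤ c.toReal + d.toReal := by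
  have hab : a + b ≠ ⊤ := ne_top_of_le_ne_top (ENNReal.add_ne_top.2 ⟨hc, hd⟩) h
  rw [← ENNReal.toReal_add (ENNReal.add_ne_top.1 hab).1 (ENNReal.add_ne_top.1 hab).2,
    ← ENNReal.toReal_add hc hd]
  exact ENNReal.toReal_mono (ENNReal.add_ne_top.2 ⟨hc, hd⟩) h

lemma ENNReal.toReal_add_eq_of_add_eq {a b c d : ℝ≥0∞} (h : a + b = c + d) (hc : c ≠ ⊤)
    (hd : d ≠ ⊤) : a.toReal + b.toReal = c.toReal + d.toReal := by
  have hab : a + b ≠ ⊤ := h ▸ ENNReal.add_ne_top.2 ⟨hc, hd⟩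
  rw [← ENNReal.toReal_add (ENNReal.add_ne_top.1 hab).1 (ENNReal.add_ne_top.1 hab).2,
    ← ENNReal.toReal_add hc hd, h]

lemma norm_eIθ (θ : ℝ) : ‖eIθ θ‖ = 1 := by
  rw [eIθ, Complex.norm_exp_ofReal_mul_I]

lemma norm_sq_transfer_add_defect (α β m ε : ℝ) (z v : ℂ) :
    ‖eIθ β * m * (v + ε * (eIθ α * m * z - ε * v))‖ ^ 2
        + (1 - ε ^ 2) * ‖eIθ α * m * z - ε * v‖ ^ 2
        + (1 - m ^ 2) * (‖z‖ ^ 2 + ‖m * ε * (eIθ α * z) + ((1 - ε ^ 2 : ℝ) : ℂ) * v‖ ^ 2)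
      = ‖z‖ ^ 2 + (1 - ε ^ 2) * ‖v‖ ^ 2 := by
  have hz : ‖z‖ = ‖eIθ α * z‖ := by rw [norm_mul, norm_eIθ, one_mul]
  rw [mul_assoc (eIθ β), norm_mul, norm_eIθ, one_mul, hz,
    show eIθ α * m * z = m * (eIθ α * z) by ring]
  generalize eIθ α * z = c
  simp only [Complex.sq_norm, Complex.normSq_apply, Complex.add_re, Complex.add_im,
    Complex.sub_re, Complex.sub_im, Complex.mul_re, Complex.mul_im, Complex.ofReal_re,
    Complex.ofReal_im]
  ring

lemma enorm_sq_add_ofReal_mul {k : ℝ} (hk : 0 ≤ k) (a b : ℂ) :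
    ‖a‖ₑ ^ 2 + ENNReal.ofReal k * ‖b‖ₑ ^ 2 = ENNReal.ofReal (‖a‖ ^ 2 + k * ‖b‖ ^ 2) := by
  rw [ENNReal.ofReal_add (by positivity) (by positivity), ENNReal.ofReal_mul hk,
    ENNReal.ofReal_pow (norm_nonneg _), ENNReal.ofReal_pow (norm_nonneg _), ofReal_norm,
    ofReal_norm]

lemma enorm_sq_transfer_le {α β m ε : ℝ} (hm : m ∈ Icc (0 : ℝ) 1) (hε : ε ^ 2 ≤ 1) (z v : ℂ) :
    ‖eIθ β * m * (v + ε * (eIθ α * m * z - ε * v))‖ₑ ^ 2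
        + ENNReal.ofReal (1 - ε ^ 2) * ‖eIθ α * m * z - ε * v‖ₑ ^ 2
      ≤ ‖z‖ₑ ^ 2 + ENNReal.ofReal (1 - ε ^ 2) * ‖v‖ₑ ^ 2 := by
  rw [enorm_sq_add_ofReal_mul (by linarith), enorm_sq_add_ofReal_mul (by linarith)]
  refine ENNReal.ofReal_le_ofReal ?_
  have hdefect : 0 ≤ (1 - m ^ 2)
      * (‖z‖ ^ 2 + ‖m * ε * (eIθ α * z) + ((1 - ε ^ 2 : ℝ) : ℂ) * v‖ ^ 2) :=
    mul_nonneg (by nlinarith [hm.1, hm.2]) (by positivity)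
  linarith [norm_sq_transfer_add_defect α β m ε z v]

lemma enorm_sq_transfer_eq {α β m ε : ℝ} (hm : m = 1) (hε : ε ^ 2 ≤ 1) (z v : ℂ) :
    ‖eIθ β * m * (v + ε * (eIθ α * m * z - ε * v))‖ₑ ^ 2
        + ENNReal.ofReal (1 - ε ^ 2) * ‖eIθ α * m * z - ε * v‖ₑ ^ 2
      = ‖z‖ₑ ^ 2 + ENNReal.ofReal (1 - ε ^ 2) * ‖v‖ₑ ^ 2 := by
  rw [enorm_sq_add_ofReal_mul (by linarith), enorm_sq_add_ofReal_mul (by linarith)]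
  congr 1
  subst hm
  linarith [norm_sq_transfer_add_defect α β 1 ε z v]

lemma lintegral_enorm_sq_add_translate {A B : ℝ → ℂ} (hA : Measurable A) (k s t : ℝ) :
    (∫⁻ x, ‖A x‖ₑ ^ 2) + ENNReal.ofReal k * ∫⁻ x, ‖B x‖ₑ ^ 2
      = ∫⁻ x, (‖A (x - s)‖ₑ ^ 2 + ENNReal.ofReal k * ‖B (x - t)‖ₑ ^ 2) := by
  rw [lintegral_add_left' (f := fun x => ‖A (x - s)‖ₑ ^ 2) (by fun_prop),
    lintegral_const_mul' _ _ ENNReal.ofReal_ne_top,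
    lintegral_sub_right_eq_self (fun x => ‖A x‖ₑ ^ 2) s,
    lintegral_sub_right_eq_self (fun x => ‖B x‖ₑ ^ 2) t]

section Transfer

variable {F G L U : ℝ → ℂ} {α β m ε s : ℝ}

lemma lintegral_transfer_le (hF : Measurable F) (hU : Measurable U) (hm : m ∈ Icc (0 : ℝ) 1)
    (hε : ε ^ 2 ≤ 1) (hL_eq : ∀ x, L x = eIθ α * m * F x - ε * G (x - s))
    (hU_eq : ∀ x, U x = eIθ β * m * (G x + ε * L (x + s))) :
    (∫⁻ x, ‖U x‖ₑ ^ 2) + ENNReal.ofReal (1 - ε ^ 2) * ∫⁻ x, ‖L x‖ₑ ^ 2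
      ≤ (∫⁻ x, ‖F x‖ₑ ^ 2) + ENNReal.ofReal (1 - ε ^ 2) * ∫⁻ x, ‖G x‖ₑ ^ 2 := by
  rw [lintegral_enorm_sq_add_translate hU _ s 0, lintegral_enorm_sq_add_translate hF _ 0 s]
  refine lintegral_mono fun x => ?_
  rw [hU_eq, sub_add_cancel, sub_zero, hL_eq]
  exact enorm_sq_transfer_le hm hε _ _

lemma lintegral_transfer_eq (hF : Measurable F) (hU : Measurable U) (hm : m = 1)
    (hε : ε ^ 2 ≤ 1) (hL_eq : ∀ x, L x = eIθ α * m * F x - ε * G (x - s))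
    (hU_eq : ∀ x, U x = eIθ β * m * (G x + ε * L (x + s))) :
    (∫⁻ x, ‖U x‖ₑ ^ 2) + ENNReal.ofReal (1 - ε ^ 2) * ∫⁻ x, ‖L x‖ₑ ^ 2
      = (∫⁻ x, ‖F x‖ₑ ^ 2) + ENNReal.ofReal (1 - ε ^ 2) * ∫⁻ x, ‖G x‖ₑ ^ 2 := by
  rw [lintegral_enorm_sq_add_translate hU _ s 0, lintegral_enorm_sq_add_translate hF _ 0 s]
  refine lintegral_congr fun x => ?_
  rw [hU_eq, sub_add_cancel, sub_zero, hL_eq]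
  exact enorm_sq_transfer_eq hm hε _ _

end Transfer

def sliceNormSq (h : ℝ × ℝ → ℂ) (u : ℝ) : ℝ≥0∞ := ∫⁻ a, ‖h (a, u)‖ₑ ^ 2

def weightedNormSq (ω : ℝ → ℝ) (h : ℝ × ℝ → ℂ) : ℝ≥0∞ :=
  ∫⁻ u in Ioi 0, ENNReal.ofReal (ω u) * sliceNormSq h u

lemma measurable_sliceNormSq {h : ℝ × ℝ → ℂ} (hh : Measurable h) :
    Measurable (sliceNormSq h) :=
  (show Measurable fun p : ℝ × ℝ => ‖h p‖ₑ ^ 2 by fun_prop).lintegral_prod_left'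

lemma weightedNormSq_add_weightedNormSq {A : ℝ × ℝ → ℂ} (hA : Measurable A) {c : ℝ} (hc : 0 ≤ c)
    (B : ℝ × ℝ → ℂ) (ε : ℝ → ℝ) :
    weightedNormSq (fun _ => c) A + weightedNormSq (fun u => c * (1 - ε u ^ 2)) B
      = ∫⁻ u in Ioi 0, ENNReal.ofReal c
          * (sliceNormSq A u + ENNReal.ofReal (1 - ε u ^ 2) * sliceNormSq B u) := by
  rw [weightedNormSq, weightedNormSq,
    ← lintegral_add_left' ((measurable_sliceNormSq hA).const_mul _).aemeasurable]
  refine lintegral_congr fun u => ?_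
  rw [ENNReal.ofReal_mul hc]
  ring

section WeightedTransfer

variable {F G L U : ℝ × ℝ → ℂ} {m ε s : ℝ → ℝ} {α β c : ℝ}

lemma weightedNormSq_transfer_le (hc : 0 ≤ c) (hF : Measurable F) (hU : Measurable U)
    (hm : ∀ u, 0 < u → m u ∈ Icc (0 : ℝ) 1) (hε : ∀ u, 0 < u → ε u ^ 2 ≤ 1)
    (hL_eq : ∀ a u, L (a, u) = eIθ α * m u * F (a, u) - ε u * G (a - s u, u))
    (hU_eq : ∀ a u, U (a, u) = eIθ β * m u * (G (a, u) + ε u * L (a + s u, u))) :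
    weightedNormSq (fun _ => c) U + weightedNormSq (fun u => c * (1 - ε u ^ 2)) L
      ≤ weightedNormSq (fun _ => c) F + weightedNormSq (fun u => c * (1 - ε u ^ 2)) G := by
  rw [weightedNormSq_add_weightedNormSq hU hc, weightedNormSq_add_weightedNormSq hF hc]
  refine setLIntegral_mono' measurableSet_Ioi fun u hu => mul_le_mul_right ?_ _
  exact lintegral_transfer_le (by fun_prop) (by fun_prop) (hm u hu) (hε u hu)
    (fun a => hL_eq a u) (fun a => hU_eq a u)

lemma weightedNormSq_transfer_eq (hc : 0 ≤ c) (hF : Measurable F) (hU : Measurable U)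
    (hm : ∀ u, 0 < u → m u = 1) (hε : ∀ u, 0 < u → ε u ^ 2 ≤ 1)
    (hL_eq : ∀ a u, L (a, u) = eIθ α * m u * F (a, u) - ε u * G (a - s u, u))
    (hU_eq : ∀ a u, U (a, u) = eIθ β * m u * (G (a, u) + ε u * L (a + s u, u))) :
    weightedNormSq (fun _ => c) U + weightedNormSq (fun u => c * (1 - ε u ^ 2)) L
      = weightedNormSq (fun _ => c) F + weightedNormSq (fun u => c * (1 - ε u ^ 2)) G := by
  rw [weightedNormSq_add_weightedNormSq hU hc, weightedNormSq_add_weightedNormSq hF hc]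
  refine setLIntegral_congr_fun measurableSet_Ioi fun u hu => congrArg _ ?_
  exact lintegral_transfer_eq (by fun_prop) (by fun_prop) (hm u hu) (hε u hu)
    (fun a => hL_eq a u) (fun a => hU_eq a u)

end WeightedTransfer

lemma weightedNormSq_ne_top {ω : ℝ → ℝ} {C : ℝ} (hω : ∀ u, ω u ≤ C) {h : ℝ × ℝ → ℂ}
    (hm : Measurable h) (hh : MemLp h 2 (volume.restrict (univ ×ˢ Ioi (0 : ℝ)))) :
    weightedNormSq ω h ≠ ⊤ := by
  have hprod : (volume : Measure (ℝ × ℝ)).restrict (univ ×ˢ Ioi 0)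
      = volume.prod (volume.restrict (Ioi 0)) := by
    rw [Measure.volume_eq_prod, ← Measure.prod_restrict, Measure.restrict_univ]
  have hL2 : ∫⁻ u in Ioi 0, sliceNormSq h u < ⊤ := by
    have := lintegral_rpow_enorm_lt_top_of_eLpNorm_lt_top two_ne_zero ENNReal.ofNat_ne_top
      hh.eLpNorm_lt_top
    rw [hprod, lintegral_prod_symm _ (by fun_prop)] at this
    simpa [sliceNormSq] using this
  refine ne_top_of_le_ne_top (ENNReal.mul_ne_top (ENNReal.ofReal_ne_top (r := C)) hL2.ne) ?_
  rw [weightedNormSq, ← lintegral_const_mul' _ _ ENNReal.ofReal_ne_top]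
  exact lintegral_mono fun u => mul_le_mul_left (ENNReal.ofReal_le_ofReal (hω u)) _

def finThreeEquiv : ℝ × ℝ × ℝ ≃ᵐ (Fin 3 → ℝ) :=
  ((MeasurableEquiv.refl ℝ).prodCongr MeasurableEquiv.finTwoArrow.symm).trans
    (MeasurableEquiv.piFinSuccAbove (fun _ : Fin 3 => ℝ) 0).symm

lemma finThreeEquiv_apply (p : ℝ × ℝ × ℝ) : finThreeEquiv p = ![p.1, p.2.1, p.2.2] := by
  funext i; fin_cases i <;> rfl

lemma measurePreserving_finThreeEquiv : MeasurePreserving finThreeEquiv volume volume :=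
  ((volume_preserving_piFinSuccAbove (fun _ : Fin 3 => ℝ) 0).symm _).comp
    ((MeasurePreserving.id volume).prod ((volume_preserving_finTwoArrow ℝ).symm _))

lemma lintegral_Omega {F : (Fin 3 → ℝ) → ℝ≥0∞} (hF : Measurable F) :
    ∫⁻ x in Omega, F x = ∫⁻ t in Ioi 0, ∫⁻ w in Ioi 0, ∫⁻ a, F ![a, t, w] := by
  have hpre : finThreeEquiv ⁻¹' Omega = univ ×ˢ Ioi 0 ×ˢ Ioi 0 := by
    ext p; simp [Omega, finThreeEquiv_apply]
  have hprod : (volume : Measure (ℝ × ℝ × ℝ)).restrict (univ ×ˢ Ioi 0 ×ˢ Ioi 0)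
      = volume.prod ((volume.restrict (Ioi 0)).prod (volume.restrict (Ioi 0))) := by
    rw [Measure.volume_eq_prod, ← Measure.prod_restrict, Measure.restrict_univ,
      Measure.volume_eq_prod, ← Measure.prod_restrict]
  have hFe : Measurable fun p => F (finThreeEquiv p) := hF.comp finThreeEquiv.measurable
  rw [← measurePreserving_finThreeEquiv.setLIntegral_comp_preimage_emb
    finThreeEquiv.measurableEmbedding, hpre, hprod, lintegral_prod_symm _ hFe.aemeasurable,
    lintegral_prod _ hFe.lintegral_prod_left'.aemeasurable]
  simp only [finThreeEquiv_apply]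

lemma lintegral_Omega_comm {F : (Fin 3 → ℝ) → ℝ≥0∞} (hF : Measurable F) :
    ∫⁻ x in Omega, F ![x 0, x 2, x 1] = ∫⁻ x in Omega, F x := by
  have hswap : Measurable fun x : Fin 3 → ℝ => ![x 0, x 2, x 1] := by
    refine measurable_pi_lambda _ fun i => ?_
    fin_cases i <;> exact measurable_pi_apply _
  rw [lintegral_Omega (F := fun x => F ![x 0, x 2, x 1]) (hF.comp hswap), lintegral_Omega hF]
  simp only [Matrix.cons_val_zero, Matrix.cons_val_one, Matrix.cons_val_two, Matrix.head_cons,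
    Matrix.tail_cons]
  have hinner : Measurable fun p : ℝ × ℝ => ∫⁻ a, F ![a, p.2, p.1] := by
    have h := (hF.comp finThreeEquiv.measurable).comp
      (show Measurable fun q : (ℝ × ℝ) × ℝ => (q.2, q.1.2, q.1.1) by fun_prop)
    simpa only [Function.comp_def, finThreeEquiv_apply] using h.lintegral_prod_right'
  exact lintegral_lintegral_swap hinner.aemeasurable

lemma setLIntegral_Ioi_comp_add_right (k : ℝ → ℝ≥0∞) (w : ℝ) :
    ∫⁻ t in Ioi 0, k (t + w) = ∫⁻ u in Ioi w, k u := by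
  have := (measurePreserving_add_right volume w).setLIntegral_comp_preimage_emb
    (measurableEmbedding_addRight w) k (Ioi w)
  simpa using this

lemma lintegral_Ioi_lintegral_Ioi_mul_comp_add {ρ k : ℝ → ℝ≥0∞} (hρ : Measurable ρ)
    (hk : Measurable k) :
    ∫⁻ t in Ioi 0, ∫⁻ w in Ioi 0, ρ w * k (t + w)
      = ∫⁻ u in Ioi 0, (∫⁻ w in Ioo 0 u, ρ w) * k u := by
  set φ : ℝ × ℝ → ℝ≥0∞ := fun p => (Iio p.2).indicator ρ p.1 * k p.2 with hφ_def
  have hφ : Measurable φ :=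
    (((hρ.comp measurable_fst).indicator (measurableSet_lt measurable_fst measurable_snd)).mul
      (hk.comp measurable_snd))
  have hshift : ∀ w ∈ Ioi (0 : ℝ), ∫⁻ t in Ioi 0, ρ w * k (t + w) = ∫⁻ u in Ioi 0, φ (w, u) := by
    intro w hw
    have hφw : ∀ u, φ (w, u) = (Ioi w).indicator (fun u => ρ w * k u) u := fun u => by
      by_cases hwu : w < u <;> simp [hφ_def, indicator_apply, hwu]
    simp only [hφw, setLIntegral_indicator measurableSet_Ioi,
      inter_eq_left.2 (Ioi_subset_Ioi (le_of_lt (mem_Ioi.1 hw)))]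
    exact setLIntegral_Ioi_comp_add_right (fun u => ρ w * k u) w
  have hcut : ∀ u ∈ Ioi (0 : ℝ), ∫⁻ w in Ioi 0, φ (w, u) = (∫⁻ w in Ioo 0 u, ρ w) * k u := by
    intro u _
    simp only [hφ_def]
    rw [lintegral_mul_const _ (hρ.indicator measurableSet_Iio),
      setLIntegral_indicator measurableSet_Iio, Iio_inter_Ioi]
  calc ∫⁻ t in Ioi 0, ∫⁻ w in Ioi 0, ρ w * k (t + w)
      = ∫⁻ w in Ioi 0, ∫⁻ t in Ioi 0, ρ w * k (t + w) :=
        lintegral_lintegral_swap (by fun_prop)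
    _ = ∫⁻ w in Ioi 0, ∫⁻ u in Ioi 0, φ (w, u) := setLIntegral_congr_fun measurableSet_Ioi hshift
    _ = ∫⁻ u in Ioi 0, ∫⁻ w in Ioi 0, φ (w, u) := lintegral_lintegral_swap hφ.aemeasurable
    _ = ∫⁻ u in Ioi 0, (∫⁻ w in Ioo 0 u, ρ w) * k u :=
        setLIntegral_congr_fun measurableSet_Ioi hcut

lemma enorm_exp_sq (hbar w : ℝ) :
    ‖((Real.exp (-w / hbar) : ℝ) : ℂ)‖ₑ ^ 2 = ENNReal.ofReal (Real.exp (-(2 / hbar) * w)) := by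
  rw [← ofReal_norm, Complex.norm_real, Real.norm_of_nonneg (Real.exp_pos _).le,
    ← ENNReal.ofReal_pow (Real.exp_pos _).le, ← Real.exp_nat_mul]
  congr 2
  ring

section ExpWeight

variable {hbar : ℝ}

lemma lintegral_exp_sq_Ioi (hbar_pos : 0 < hbar) :
    ∫⁻ w in Ioi 0, ‖((Real.exp (-w / hbar) : ℝ) : ℂ)‖ₑ ^ 2 = ENNReal.ofReal (hbar / 2) := by
  have ha : -(2 / hbar) < 0 := by simp [hbar_pos]
  simp only [enorm_exp_sq]
  rw [← ofReal_integral_eq_lintegral_ofReal (integrableOn_exp_mul_Ioi ha 0)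
    (ae_of_all _ fun _ => (Real.exp_pos _).le), integral_exp_mul_Ioi ha]
  congr 1
  field_simp
  simp

lemma lintegral_exp_sq_Ioo (hbar_pos : 0 < hbar) {u : ℝ} (hu : 0 ≤ u) :
    ∫⁻ w in Ioo 0 u, ‖((Real.exp (-w / hbar) : ℝ) : ℂ)‖ₑ ^ 2
      = ENNReal.ofReal (hbar / 2 * (1 - Real.exp (-u / hbar) ^ 2)) := by
  have ha : -(2 / hbar) ≠ 0 := by simp [hbar_pos.ne']
  simp only [enorm_exp_sq]
  rw [← ofReal_integral_eq_lintegral_ofReal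
    ((by fun_prop : Continuous fun w => Real.exp (-(2 / hbar) * w)).integrableOn_Icc.mono_set
      Ioo_subset_Icc_self) (ae_of_all _ fun _ => (Real.exp_pos _).le),
    ← integral_Ioc_eq_integral_Ioo, ← intervalIntegral.integral_of_le hu,
    intervalIntegral.integral_comp_mul_left (fun x => Real.exp x) ha, integral_exp,
    mul_zero, Real.exp_zero]
  congr 1
  rw [← Real.exp_nat_mul]
  field_simp
  ring_nf

end ExpWeight

section OmegaReduction

variable {ρ : ℝ → ℝ≥0∞} {h : ℝ × ℝ → ℂ} {hbar : ℝ}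

lemma lintegral_const_mul_enorm_sq_comp_add_right (hh : Measurable h) (r : ℝ≥0∞) (c u : ℝ) :
    ∫⁻ a, r * ‖h (a + c, u)‖ₑ ^ 2 = r * sliceNormSq h u := by
  rw [lintegral_const_mul _ (by fun_prop)]
  exact congrArg _ (lintegral_add_right_eq_self (fun a => ‖h (a, u)‖ₑ ^ 2) c)

lemma lintegral_Omega_translate (hρ : Measurable ρ) (hh : Measurable h) (σ : ℝ) :
    ∫⁻ x in Omega, ρ (x 2) * ‖h (x 0 + σ * x 2, x 1)‖ₑ ^ 2
      = ∫⁻ u in Ioi 0, (∫⁻ w in Ioi 0, ρ w) * sliceNormSq h u := by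
  rw [lintegral_Omega (by fun_prop)]
  refine lintegral_congr fun u => ?_
  simp only [Matrix.cons_val_zero, Matrix.cons_val_one, Matrix.cons_val_two, Matrix.head_cons,
    Matrix.tail_cons]
  simp_rw [lintegral_const_mul_enorm_sq_comp_add_right hh]
  exact lintegral_mul_const _ hρ

lemma lintegral_Omega_translate_shear (hρ : Measurable ρ) (hh : Measurable h) (σ : ℝ) :
    ∫⁻ x in Omega, ρ (x 2) * ‖h (x 0 + σ * x 2, x 1 + x 2)‖ₑ ^ 2
      = ∫⁻ u in Ioi 0, (∫⁻ w in Ioo 0 u, ρ w) * sliceNormSq h u := by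
  rw [lintegral_Omega (by fun_prop)]
  simp only [Matrix.cons_val_zero, Matrix.cons_val_one, Matrix.cons_val_two, Matrix.head_cons,
    Matrix.tail_cons]
  simp_rw [lintegral_const_mul_enorm_sq_comp_add_right hh]
  exact lintegral_Ioi_lintegral_Ioi_mul_comp_add hρ (measurable_sliceNormSq hh)

lemma lintegral_Omega_exp_translate (hbar_pos : 0 < hbar) (hh : Measurable h) (σ : ℝ) :
    ∫⁻ x in Omega, ‖((Real.exp (-(x 2) / hbar) : ℝ) : ℂ) * h (x 0 + σ * x 2, x 1)‖ₑ ^ 2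
      = weightedNormSq (fun _ => hbar / 2) h := by
  simp only [enorm_mul, mul_pow]
  rw [lintegral_Omega_translate (ρ := fun w => ‖((Real.exp (-w / hbar) : ℝ) : ℂ)‖ₑ ^ 2)
    (by fun_prop) hh, lintegral_exp_sq_Ioi hbar_pos, weightedNormSq]

lemma lintegral_Omega_exp_translate_shear (hbar_pos : 0 < hbar) (hh : Measurable h) (σ : ℝ) :
    ∫⁻ x in Omega, ‖((Real.exp (-(x 2) / hbar) : ℝ) : ℂ) * h (x 0 + σ * x 2, x 1 + x 2)‖ₑ ^ 2
      = weightedNormSq (fun u => hbar / 2 * (1 - Real.exp (-u / hbar) ^ 2)) h := by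
  simp only [enorm_mul, mul_pow]
  rw [lintegral_Omega_translate_shear (ρ := fun w => ‖((Real.exp (-w / hbar) : ℝ) : ℂ)‖ₑ ^ 2)
    (by fun_prop) hh, weightedNormSq]
  exact setLIntegral_congr_fun measurableSet_Ioi fun u hu => by
    rw [lintegral_exp_sq_Ioo hbar_pos (le_of_lt hu)]

lemma integral_norm_sq_eq_toReal_lintegral {α E : Type*} [MeasurableSpace α]
    [NormedAddCommGroup E] {μ : Measure α} {f : α → E} (hf : AEStronglyMeasurable f μ) :
    ∫ x, ‖f x‖ ^ 2 ∂μ = (∫⁻ x, ‖f x‖ₑ ^ 2 ∂μ).toReal := by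
  rw [integral_eq_lintegral_of_nonneg_ae (f := fun x => ‖f x‖ ^ 2)
    (ae_of_all _ fun _ => by positivity) (hf.norm.pow 2)]
  simp only [ENNReal.ofReal_pow (norm_nonneg _), ofReal_norm]

lemma integral_Omega_exp_translate (hbar_pos : 0 < hbar) (hh : Measurable h) :
    ∫ x in Omega, ‖((Real.exp (-(x 2) / hbar) : ℝ) : ℂ) * h (x 0 + x 2, x 1)‖ ^ 2
      = (weightedNormSq (fun _ => hbar / 2) h).toReal := by
  rw [integral_norm_sq_eq_toReal_lintegral (by fun_prop)]
  simpa using congrArg ENNReal.toReal (lintegral_Omega_exp_translate hbar_pos hh 1)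

lemma integral_Omega_exp_translate_neg (hbar_pos : 0 < hbar) (hh : Measurable h) :
    ∫ x in Omega, ‖((Real.exp (-(x 1) / hbar) : ℝ) : ℂ) * h (x 0 - x 1, x 2)‖ ^ 2
      = (weightedNormSq (fun _ => hbar / 2) h).toReal := by
  rw [integral_norm_sq_eq_toReal_lintegral (by fun_prop), ← lintegral_Omega_comm (by fun_prop)]
  simpa [sub_eq_add_neg] using
    congrArg ENNReal.toReal (lintegral_Omega_exp_translate hbar_pos hh (-1))

lemma integral_Omega_exp_translate_shear (hbar_pos : 0 < hbar) (hh : Measurable h) :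
    ∫ x in Omega, ‖((Real.exp (-(x 2) / hbar) : ℝ) : ℂ) * h (x 0 + x 2, x 1 + x 2)‖ ^ 2
      = (weightedNormSq (fun u => hbar / 2 * (1 - Real.exp (-u / hbar) ^ 2)) h).toReal := by
  rw [integral_norm_sq_eq_toReal_lintegral (by fun_prop)]
  simpa using congrArg ENNReal.toReal (lintegral_Omega_exp_translate_shear hbar_pos hh 1)

lemma integral_Omega_exp_translate_shear_neg (hbar_pos : 0 < hbar) (hh : Measurable h) :
    ∫ x in Omega, ‖((Real.exp (-(x 1) / hbar) : ℝ) : ℂ) * h (x 0 - x 1, x 2 + x 1)‖ ^ 2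
      = (weightedNormSq (fun u => hbar / 2 * (1 - Real.exp (-u / hbar) ^ 2)) h).toReal := by
  rw [integral_norm_sq_eq_toReal_lintegral (by fun_prop), ← lintegral_Omega_comm (by fun_prop)]
  simpa [sub_eq_add_neg, add_comm] using
    congrArg ENNReal.toReal (lintegral_Omega_exp_translate_shear hbar_pos hh (-1))

end OmegaReduction

section BoundaryMap

variable {hbar θ₁ θ₂ : ℝ} {μ : ℝ → ℝ} {f₁ f₃ f₄ f₅ : ℝ × ℝ → ℂ}

lemma measurable_g4fun (hμ : Measurable μ) (h₁ : Measurable f₁) (h₄ : Measurable f₄) :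
    Measurable (g4fun hbar θ₂ μ f₁ f₄) := by
  unfold g4fun; fun_prop

lemma measurable_g2fun (hμ : Measurable μ) (h₁ : Measurable f₁) (h₄ : Measurable f₄) :
    Measurable (g2fun hbar θ₁ θ₂ μ f₁ f₄) := by
  have := measurable_g4fun (hbar := hbar) (θ₂ := θ₂) hμ h₁ h₄
  unfold g2fun; fun_prop

lemma measurable_g3fun (hμ : Measurable μ) (h₃ : Measurable f₃) (h₅ : Measurable f₅) :
    Measurable (g3fun hbar θ₁ μ f₃ f₅) := by
  unfold g3fun; fun_prop

lemma measurable_g6fun (hμ : Measurable μ) (h₃ : Measurable f₃) (h₅ : Measurable f₅) :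
    Measurable (g6fun hbar θ₁ θ₂ μ f₃ f₅) := by
  have := measurable_g3fun (hbar := hbar) (θ₁ := θ₁) hμ h₃ h₅
  unfold g6fun; fun_prop

lemma exp_neg_div_sq_le_one (hbar_pos : 0 < hbar) {u : ℝ} (hu : 0 < u) :
    Real.exp (-u / hbar) ^ 2 ≤ 1 :=
  pow_le_one₀ (Real.exp_pos _).le
    (Real.exp_le_one_iff.2 (div_nonpos_of_nonpos_of_nonneg (by linarith) hbar_pos.le))

-- The `(f₅, f₃)` channel is the `(f₁, f₄)` channel with the shift `u` replaced by `-u`.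
lemma g3fun_eq (a u : ℝ) : g3fun hbar θ₁ μ f₃ f₅ (a, u)
    = eIθ θ₁ * μ u * f₅ (a, u) - Real.exp (-u / hbar) * f₃ (a - -u, u) := by
  rw [sub_neg_eq_add]; rfl

lemma g6fun_eq (a u : ℝ) : g6fun hbar θ₁ θ₂ μ f₃ f₅ (a, u) = eIθ θ₂ * μ u
    * (f₃ (a, u) + Real.exp (-u / hbar) * g3fun hbar θ₁ μ f₃ f₅ (a + -u, u)) := by
  rw [← sub_eq_add_neg]; rfl

lemma weightedNormSq_g2fun_add_g4fun_le (hbar_pos : 0 < hbar) (hμ : Measurable μ)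
    (hμ01 : ∀ u, 0 < u → μ u ∈ Icc (0 : ℝ) 1)
    (h₁ : Measurable f₁) (h₄ : Measurable f₄) :
    weightedNormSq (fun _ => hbar / 2) (g2fun hbar θ₁ θ₂ μ f₁ f₄)
        + weightedNormSq (fun u => hbar / 2 * (1 - Real.exp (-u / hbar) ^ 2))
          (g4fun hbar θ₂ μ f₁ f₄)
      ≤ weightedNormSq (fun _ => hbar / 2) f₁
        + weightedNormSq (fun u => hbar / 2 * (1 - Real.exp (-u / hbar) ^ 2)) f₄ :=
  weightedNormSq_transfer_le (s := fun u => u) (by positivity) h₁ (measurable_g2fun hμ h₁ h₄) hμ01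
    (fun _ => exp_neg_div_sq_le_one hbar_pos) (fun _ _ => rfl) (fun _ _ => rfl)

lemma weightedNormSq_g2fun_add_g4fun_eq (hbar_pos : 0 < hbar) (hμ : Measurable μ)
    (hμ1 : ∀ u, 0 < u → μ u = 1) (h₁ : Measurable f₁) (h₄ : Measurable f₄) :
    weightedNormSq (fun _ => hbar / 2) (g2fun hbar θ₁ θ₂ μ f₁ f₄)
        + weightedNormSq (fun u => hbar / 2 * (1 - Real.exp (-u / hbar) ^ 2))
          (g4fun hbar θ₂ μ f₁ f₄)
      = weightedNormSq (fun _ => hbar / 2) f₁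
        + weightedNormSq (fun u => hbar / 2 * (1 - Real.exp (-u / hbar) ^ 2)) f₄ :=
  weightedNormSq_transfer_eq (s := fun u => u) (by positivity) h₁ (measurable_g2fun hμ h₁ h₄) hμ1
    (fun _ => exp_neg_div_sq_le_one hbar_pos) (fun _ _ => rfl) (fun _ _ => rfl)

lemma weightedNormSq_g6fun_add_g3fun_le (hbar_pos : 0 < hbar) (hμ : Measurable μ)
    (hμ01 : ∀ u, 0 < u → μ u ∈ Icc (0 : ℝ) 1)
    (h₃ : Measurable f₃) (h₅ : Measurable f₅) :
    weightedNormSq (fun _ => hbar / 2) (g6fun hbar θ₁ θ₂ μ f₃ f₅)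
        + weightedNormSq (fun u => hbar / 2 * (1 - Real.exp (-u / hbar) ^ 2))
          (g3fun hbar θ₁ μ f₃ f₅)
      ≤ weightedNormSq (fun _ => hbar / 2) f₅
        + weightedNormSq (fun u => hbar / 2 * (1 - Real.exp (-u / hbar) ^ 2)) f₃ :=
  weightedNormSq_transfer_le (by positivity) h₅ (measurable_g6fun hμ h₃ h₅) hμ01
    (fun _ => exp_neg_div_sq_le_one hbar_pos) g3fun_eq g6fun_eq

lemma weightedNormSq_g6fun_add_g3fun_eq (hbar_pos : 0 < hbar) (hμ : Measurable μ)
    (hμ1 : ∀ u, 0 < u → μ u = 1) (h₃ : Measurable f₃) (h₅ : Measurable f₅) :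
    weightedNormSq (fun _ => hbar / 2) (g6fun hbar θ₁ θ₂ μ f₃ f₅)
        + weightedNormSq (fun u => hbar / 2 * (1 - Real.exp (-u / hbar) ^ 2))
          (g3fun hbar θ₁ μ f₃ f₅)
      = weightedNormSq (fun _ => hbar / 2) f₅
        + weightedNormSq (fun u => hbar / 2 * (1 - Real.exp (-u / hbar) ^ 2)) f₃ :=
  weightedNormSq_transfer_eq (by positivity) h₅ (measurable_g6fun hμ h₃ h₅) hμ1
    (fun _ => exp_neg_div_sq_le_one hbar_pos) g3fun_eq g6fun_eq

end BoundaryMap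

theorem boundary_map_contraction
    (hbar : ℝ) (hhbar : 0 < hbar) (θ₁ θ₂ : ℝ)
    (μ : ℝ → ℝ) (hμmeas : Measurable μ) (hμ01 : ∀ b : ℝ, 0 < b → μ b ∈ Set.Icc (0 : ℝ) 1)
    (f₁ f₃ f₄ f₅ : ℝ × ℝ → ℂ)
    (hf₁ : MemLp f₁ 2 (volume.restrict (Set.univ ×ˢ Set.Ioi (0 : ℝ))))
    (hf₃ : MemLp f₃ 2 (volume.restrict (Set.univ ×ˢ Set.Ioi (0 : ℝ))))
    (hf₄ : MemLp f₄ 2 (volume.restrict (Set.univ ×ˢ Set.Ioi (0 : ℝ))))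
    (hf₅ : MemLp f₅ 2 (volume.restrict (Set.univ ×ˢ Set.Ioi (0 : ℝ))))
    (hmeas : Measurable f₁ ∧ Measurable f₃ ∧ Measurable f₄ ∧ Measurable f₅) :
    Real.sqrt (normSqPlus hbar θ₁ θ₂ μ f₁ f₃ f₄ f₅)
      ≤ Real.sqrt (normSqMinus hbar f₁ f₃ f₄ f₅) ∧
    ((∀ b : ℝ, 0 < b → μ b = 1) →
      Real.sqrt (normSqPlus hbar θ₁ θ₂ μ f₁ f₃ f₄ f₅)
        = Real.sqrt (normSqMinus hbar f₁ f₃ f₄ f₅)) := by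
  obtain ⟨h₁, h₃, h₄, h₅⟩ := hmeas
  rw [normSqPlus, normSqMinus,
    integral_Omega_exp_translate_neg hhbar (measurable_g2fun hμmeas h₁ h₄),
    integral_Omega_exp_translate_shear_neg hhbar (measurable_g3fun hμmeas h₃ h₅),
    integral_Omega_exp_translate_shear hhbar (measurable_g4fun hμmeas h₁ h₄),
    integral_Omega_exp_translate hhbar (measurable_g6fun hμmeas h₃ h₅),
    integral_Omega_exp_translate hhbar h₁, integral_Omega_exp_translate_shear hhbar h₃,
    integral_Omega_exp_translate_shear_neg hhbar h₄, integral_Omega_exp_translate_neg hhbar h₅]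
  have hω : ∀ u : ℝ, hbar / 2 * (1 - Real.exp (-u / hbar) ^ 2) ≤ hbar / 2 := fun u => by
    nlinarith [sq_nonneg (Real.exp (-u / hbar))]
  have fin₁ := weightedNormSq_ne_top (ω := fun _ => hbar / 2) (fun _ => le_rfl) h₁ hf₁
  have fin₅ := weightedNormSq_ne_top (ω := fun _ => hbar / 2) (fun _ => le_rfl) h₅ hf₅
  have fin₃ := weightedNormSq_ne_top hω h₃ hf₃
  have fin₄ := weightedNormSq_ne_top hω h₄ hf₄
  refine ⟨Real.sqrt_le_sqrt ?_, fun hμ1 => congrArg Real.sqrt ?_⟩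
  · linarith [ENNReal.toReal_add_le_of_add_le
      (weightedNormSq_g2fun_add_g4fun_le (θ₁ := θ₁) (θ₂ := θ₂) hhbar hμmeas hμ01 h₁ h₄) fin₁ fin₄,
      ENNReal.toReal_add_le_of_add_le
      (weightedNormSq_g6fun_add_g3fun_le (θ₁ := θ₁) (θ₂ := θ₂) hhbar hμmeas hμ01 h₃ h₅) fin₅ fin₃]
  · linarith [ENNReal.toReal_add_eq_of_add_eq
      (weightedNormSq_g2fun_add_g4fun_eq (θ₁ := θ₁) (θ₂ := θ₂) hhbar hμmeas hμ1 h₁ h₄) fin₁ fin₄,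
      ENNReal.toReal_add_eq_of_add_eq
      (weightedNormSq_g6fun_add_g3fun_eq (θ₁ := θ₁) (θ₂ := θ₂) hhbar hμmeas hμ1 h₃ h₅) fin₅ fin₃]
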